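/- arXiv:math/0610644 — 3 statements merged into one kernel-verified Lean document; each statement's English description precedes it below -/
import Mathlib

section
/- Let V be a symplectic vector space over a field F of characteristic ≠ 2, let g ∈ Sp(V), and let ℓ ⊂ V be a Lagrangian subspace. For a, b ∈ ℓ ∩ (g-1)V with b = (g-1)y, define q'(a,b) := ⟨a, y⟩. Then q' is well-defined on ℓ ∩ (g-1)V modulo the ambiguity (independent of the choice of y with b = (g-1)y, since ⟨a, k⟩ = 0 for k ∈ ker(g-1) whenever a ∈ (g-1)V), and q' is a symmetric bilinear form: q'(a,b) = q'(b,a) for all a, b ∈ ℓ ∩ (g-1)V. -/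
/-- A Lagrangian subspace: isotropic and coisotropic. -/
def IsLagrangian {F M : Type*} [Field F] [AddCommGroup M] [Module F M]
    (B : M → M → F) (ℓ : Submodule F M) : Prop :=
  (∀ x ∈ ℓ, ∀ y ∈ ℓ, B x y = 0) ∧ ∀ x : M, (∀ y ∈ ℓ, B x y = 0) → x ∈ ℓ

/-- For `g ∈ Sp(V)` and `ℓ` Lagrangian, the form
`q'(a,b) = ω a y` (where `(g-1) y = b`) on `ℓ ∩ (g-1)V` is well defined
(independent of the choice of `y`) and symmetric. -/
theorem stmt1 {F V : Type*} [Field F] [AddCommGroup V] [Module F V]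
    [FiniteDimensional F V] (hchar : (2 : F) ≠ 0)
    (ω : V →ₗ[F] V →ₗ[F] F) (halt : ∀ v, ω v v = 0)
    (hnd : ∀ v, (∀ w, ω v w = 0) → v = 0)
    (g : V ≃ₗ[F] V) (hg : ∀ v w, ω (g v) (g w) = ω v w)
    (f : V →ₗ[F] V) (hf : ∀ v, f v = g v - v)
    (ℓ : Submodule F V) (hℓ : IsLagrangian (fun x y => ω x y) ℓ) :
    (∀ a b : V, a ∈ ℓ ⊓ LinearMap.range f → b ∈ ℓ ⊓ LinearMap.range f →
      ∀ y z : V, f y = b → f z = b → ω a y = ω a z) ∧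
    (∀ a b : V, a ∈ ℓ ⊓ LinearMap.range f → b ∈ ℓ ⊓ LinearMap.range f →
      ∀ x y : V, f x = a → f y = b → ω a y = ω b x) := by
  have skew : ∀ x y : V, ω x y = - ω y x := by
    intro x y
    have h := halt (x + y)
    simp only [map_add, LinearMap.add_apply, halt x, halt y, zero_add, add_zero] at h
    linear_combination h
  -- key: range f is orthogonal to ker f
  have hker : ∀ x k : V, f k = 0 → ω (f x) k = 0 := by
    intro x k hk
    have hgk : g k = k := by
      have := hf k
      rw [hk] at this
      exact sub_eq_zero.mp this.symm
    rw [hf]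
    calc ω (g x - x) k = ω (g x) k - ω x k := by
          simp [map_sub]
      _ = ω (g x) (g k) - ω x k := by rw [hgk]
      _ = 0 := by rw [hg]; ring
  refine ⟨?_, ?_⟩
  · rintro a b ⟨ha, x, hx⟩ hb y z hy hz
    have h0 : ω a (y - z) = 0 := by
      rw [← hx]
      exact hker x (y - z) (by rw [map_sub, hy, hz, sub_self])
    have := h0
    rw [map_sub] at this
    linear_combination this
  · rintro a b ⟨ha, x, hx⟩ ⟨hb, y', hy'⟩ x' y hx' hy
    -- ω a y = -ω (g x') b + something ... compute directly
    have hgx : g x' = a + x' := by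
      rw [← hx', hf x']; abel
    have hgy : g y = b + y := by
      rw [← hy, hf y]; abel
    have key := hg x' y
    rw [hgx, hgy] at key
    simp only [map_add, LinearMap.add_apply] at key
    -- key : ω a b + ω a y + (ω x' b + ω x' y) = ω x' y
    have hab : ω a b = 0 := hℓ.1 a ha b hb
    have hxb : ω x' b = - ω b x' := skew x' b
    linear_combination key - hab - hxb
end

section
/- Let V be a symplectic vector space over a field F (char F ≠ 2), g ∈ Sp(V) with g - 1 invertible, and ℓ ⊂ V a Lagrangian subspace. Then the bilinear form q'(a,b) := ⟨a, (g-1)^{-1} b⟩ on ℓ is symmetric. -/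
/-- If `g ∈ Sp(V)` with `g - 1` invertible (with inverse `h`) and `ℓ` is
Lagrangian, then `q'(a,b) = ω a ((g-1)⁻¹ b)` is a symmetric bilinear form on `ℓ`. -/
theorem stmt2 {F V : Type*} [Field F] [AddCommGroup V] [Module F V]
    [FiniteDimensional F V] (hchar : (2 : F) ≠ 0)
    (ω : V →ₗ[F] V →ₗ[F] F) (halt : ∀ v, ω v v = 0)
    (hnd : ∀ v, (∀ w, ω v w = 0) → v = 0)
    (g : V ≃ₗ[F] V) (hg : ∀ v w, ω (g v) (g w) = ω v w)
    (f : V →ₗ[F] V) (hf : ∀ v, f v = g v - v)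
    (h : V →ₗ[F] V) (hfh : ∀ v, f (h v) = v) (hhf : ∀ v, h (f v) = v)
    (ℓ : Submodule F V) (hℓ : IsLagrangian (fun x y => ω x y) ℓ) :
    ∀ a ∈ ℓ, ∀ b ∈ ℓ, ω a (h b) = ω b (h a) := by
  intro a ha b hb
  have skew : ∀ v w : V, ω v w + ω w v = 0 := by
    intro v w
    have h1 := halt (v + w)
    simp only [map_add, LinearMap.add_apply, halt v, halt w] at h1
    linear_combination h1
  have hiso : ω a b = 0 := hℓ.1 a ha b hb
  have hax : g (h a) - h a = a := by rw [← hf, hfh]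
  have hbx : g (h b) - h b = b := by rw [← hf, hfh]
  set x := h a
  set y := h b
  rw [← hax, ← hbx] at hiso ⊢
  simp only [map_sub, LinearMap.sub_apply] at hiso ⊢
  have hg1 := hg x y
  have s1 := skew (g y) x
  have s2 := skew y x
  linear_combination -hiso + hg1 - s1 + s2
end

section
/- Let V be a symplectic vector space over a field of char ≠ 2, g ∈ Sp(V), and ℓ a Lagrangian. Define T̂ := {(x, y, z) ∈ Γ_g × Γ_1 × (ℓ⊕ℓ) | x + y + z = 0 in V̄⊕V} with quadratic form q((x,y,z)) := ⟨x, z⟩ (symplectic form of V̄⊕V), and Ŝ' := ℓ ∩ (g-1)V with form q'(a,a) := ⟨a, w⟩ for any w with (g-1)w = a. Then the map f : T̂ → Ŝ' sending ((x,gx),(y,y),(a,b)) ↦ a - b is a well-defined linear map and is an isometry: q(s) = q'(f(s), f(s)) for all s ∈ T̂. -/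
/-- Elements of `T̂ ⊂ Γ_g × Γ₁ × (ℓ ⊕ ℓ)` are triples
`((x,gx),(y,y),(a,b))` with `x + y + a = 0` and `gx + y + b = 0` in `V`; the quadratic
form is `q(s) = ⟨(x,gx),(a,b)⟩ = -ω x a + ω (gx) b` (form of `V̄ ⊕ V`).  The map
`f : s ↦ a - b` lands in `ℓ ∩ (g-1)V` (indeed `a - b = (g-1)x`) and is an isometry onto
`(Ŝ', q')` where `q'(c,c) = ω c w` for `(g-1)w = c`: `q(s) = ω (a-b) x`. -/
theorem stmt16 {F V : Type*} [Field F] [AddCommGroup V] [Module F V]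
    [FiniteDimensional F V] (hchar : (2 : F) ≠ 0)
    (ω : V →ₗ[F] V →ₗ[F] F) (halt : ∀ v, ω v v = 0)
    (hnd : ∀ v, (∀ w, ω v w = 0) → v = 0)
    (g : V ≃ₗ[F] V) (hg : ∀ v w, ω (g v) (g w) = ω v w)
    (f : V →ₗ[F] V) (hf : ∀ v, f v = g v - v)
    (ℓ : Submodule F V) (hℓ : IsLagrangian (fun x y => ω x y) ℓ) :
    ∀ x y a b : V, a ∈ ℓ → b ∈ ℓ → x + y + a = 0 → g x + y + b = 0 →
      (a - b = f x) ∧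
      (a - b ∈ ℓ ⊓ LinearMap.range f) ∧
      (-(ω x a) + ω (g x) b = ω (a - b) x) := by
  intro x y a b ha hb h1 h2
  have hA : a = -(x + y) := eq_neg_of_add_eq_zero_right h1
  have hB : b = -(g x + y) := eq_neg_of_add_eq_zero_right h2
  have hab : a - b = f x := by rw [hf, hA, hB]; abel
  refine ⟨hab, ⟨Submodule.sub_mem ℓ ha hb, hab ▸ ⟨x, rfl⟩⟩, ?_⟩
  have skew : ∀ u v : V, ω u v = -ω v u := by
    intro u v
    have h := halt (u + v)
    simp only [map_add, LinearMap.add_apply, halt] at h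
    linear_combination h
  have hga : ω (g x) a = ω x a := by
    have hmem : g x - x ∈ ℓ := by
      have h' : g x - x = a - b := by rw [hA, hB]; abel
      rw [h']; exact Submodule.sub_mem ℓ ha hb
    have h0 : ω (g x - x) a = 0 := hℓ.1 _ hmem _ ha
    simp only [map_sub, LinearMap.sub_apply] at h0
    linear_combination h0
  rw [hA, hB]
  simp only [map_neg, map_sub, map_add, LinearMap.neg_apply, LinearMap.sub_apply,
    LinearMap.add_apply]
  have hy : y = -(x + a) := by rw [hA]; abel
  have e1 : ω a x = ω x y := by
    rw [hA]
    simp only [map_neg, map_add, LinearMap.neg_apply, LinearMap.add_apply]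
    linear_combination -halt x - skew y x
  have e2 : ω x a = -ω x y := by
    rw [hA]; simp only [map_neg, map_add]; linear_combination -halt x
  have e3 : ω (g x) y = -ω (g x) x - ω (g x) a := by
    rw [hy]; simp only [map_neg, map_add]; ring
  linear_combination 2 * halt x - halt (g x) - e3 + hga + e2
end
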